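/- arXiv:2003.02915 — 4 statements merged into one kernel-verified Lean document; each statement's English description precedes it below -/
import Mathlib

section
/- For k ≥ 2, the number of set partitions of [n] with exactly k blocks avoiding the pattern 13/2 equals the binomial coefficient C(n-1, k-1). -/
open Finset Polynomial

/-- Set partitions of `[n] = {1, …, n}`, modeled as finpartitions of `Fin n`. -/
abbrev SP (n : ℕ) := Finpartition (Finset.univ : Finset (Fin n))

noncomputable instance (n : ℕ) : Fintype (SP n) :=
  Fintype.ofInjective Finpartition.parts fun _ _ h => Finpartition.ext h

/-- `i` and `j` lie in the same block of the set partition `P`. -/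
def inSameBlock {n : ℕ} (P : SP n) (i j : Fin n) : Prop :=
  ∃ B ∈ P.parts, i ∈ B ∧ j ∈ B

/-- `P` avoids the pattern `1/2/3`: no three elements lie in three pairwise distinct blocks. -/
def avoids1_2_3 {n : ℕ} (P : SP n) : Prop :=
  ¬ ∃ a b c : Fin n, a < b ∧ b < c ∧
    ¬ inSameBlock P a b ∧ ¬ inSameBlock P b c ∧ ¬ inSameBlock P a c

/-- `P` avoids the pattern `13/2`. -/
def avoids13_2 {n : ℕ} (P : SP n) : Prop :=
  ¬ ∃ a b c : Fin n, a < b ∧ b < c ∧ inSameBlock P a c ∧ ¬ inSameBlock P a b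

/-- `P` avoids the pattern `1/23`. -/
def avoids1_23 {n : ℕ} (P : SP n) : Prop :=
  ¬ ∃ a b c : Fin n, a < b ∧ b < c ∧ inSameBlock P b c ∧ ¬ inSameBlock P a b

/-- `P` avoids the pattern `12/3`. -/
def avoids12_3 {n : ℕ} (P : SP n) : Prop :=
  ¬ ∃ a b c : Fin n, a < b ∧ b < c ∧ inSameBlock P a b ∧ ¬ inSameBlock P a c

/-- `P` avoids the pattern `123`: every block has at most two elements. -/
def avoids123 {n : ℕ} (P : SP n) : Prop :=
  ∀ B ∈ P.parts, B.card ≤ 2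

/-- The block of `P` containing `i`. -/
def blockOf {n : ℕ} (P : SP n) (i : Fin n) : Finset (Fin n) :=
  (P.parts.filter (fun B => i ∈ B)).sup id

/-- The restricted growth function of `P`: the letter at position `i` is the index
(starting from 1) of the block containing `i`, blocks being ordered by increasing minima. -/
def rgf {n : ℕ} (P : SP n) (i : Fin n) : ℕ :=
  (P.parts.filter (fun B => B.min ≤ (blockOf P i).min)).card

/-- The left-bigger statistic of Wachs and White. -/
def lbStat {n : ℕ} (w : Fin n → ℕ) : ℕ :=
  ∑ j : Fin n, (((Finset.univ.filter (fun i => i < j)).image w).filter (fun v => w j < v)).card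

/-- The left-smaller statistic of Wachs and White. -/
def lsStat {n : ℕ} (w : Fin n → ℕ) : ℕ :=
  ∑ j : Fin n, (((Finset.univ.filter (fun i => i < j)).image w).filter (fun v => v < w j)).card

/-- The right-bigger statistic of Wachs and White. -/
def rbStat {n : ℕ} (w : Fin n → ℕ) : ℕ :=
  ∑ j : Fin n, (((Finset.univ.filter (fun i => j < i)).image w).filter (fun v => w j < v)).card

/-- The right-smaller statistic of Wachs and White. -/
def rsStat {n : ℕ} (w : Fin n → ℕ) : ℕ :=
  ∑ j : Fin n, (((Finset.univ.filter (fun i => j < i)).image w).filter (fun v => v < w j)).card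

open Classical in
/-- The generating function `∑ q^{stat(π)}` over `k`-block partitions of `[n]` avoiding
a given family of patterns (described by the avoidance predicate `avoid`). -/
noncomputable def genPoly (n k : ℕ) (avoid : SP n → Prop) (stat : (Fin n → ℕ) → ℕ) :
    Polynomial ℕ :=
  ∑ P ∈ Finset.univ.filter (fun P : SP n => P.parts.card = k ∧ avoid P),
    Polynomial.X ^ (stat (rgf P))

/-!
A partition avoids `13/2` exactly when its blocks are intervals. Such a partition is determined
by the minima of its blocks other than the first element, a `(k-1)`-subset of `{2, …, n}`;
conversely, cutting `[n]` just before each element of such a subset gives a `13/2`-avoiding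
partition with `k` blocks.
-/

namespace Finpartition

variable {α : Type*} [DecidableEq α]

lemma parts_eq_image_part {s : Finset α} (P : Finpartition s) : P.parts = s.image P.part := by
  ext B
  refine ⟨fun hB => ?_, fun hB => ?_⟩
  · obtain ⟨a, ha⟩ := P.nonempty_of_mem_parts hB
    exact mem_image.2 ⟨a, P.subset hB ha, P.part_eq_of_mem hB ha⟩
  · obtain ⟨a, ha, rfl⟩ := mem_image.1 hB
    exact P.part_mem.2 ha

lemma ext_of_part_eq_part_iff {s : Finset α} {P Q : Finpartition s}
    (h : ∀ a ∈ s, ∀ b ∈ s, P.part a = P.part b ↔ Q.part a = Q.part b) : P = Q := by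
  have hpart : ∀ a ∈ s, P.part a = Q.part a := fun a ha => by
    ext b
    by_cases hb : b ∈ s
    · rw [P.mem_part_iff_part_eq_part hb ha, Q.mem_part_iff_part_eq_part hb ha, h b hb a ha]
    · exact iff_of_false (fun h => hb (P.part_subset a h)) (fun h => hb (Q.part_subset a h))
  ext1
  rw [parts_eq_image_part P, parts_eq_image_part Q]
  exact image_congr hpart

variable [Fintype α]

lemma part_ofSetoid_eq_part_iff {s : Setoid α} [DecidableRel s.r] {a b : α} :
    (ofSetoid s).part a = (ofSetoid s).part b ↔ s a b := by
  rw [eq_comm, ← (ofSetoid s).mem_part_iff_part_eq_part (mem_univ b) (mem_univ a),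
    mem_part_ofSetoid_iff_rel]

variable [LinearOrder α] (P : Finpartition (univ : Finset α))

def partMins : Finset α := {a | ∀ b < a, P.part b ≠ P.part a}

def IsIntervalPartition : Prop :=
  ∀ a b c, a ≤ b → b ≤ c → P.part a = P.part c → P.part b = P.part a

variable {P}

lemma mem_partMins {a : α} : a ∈ P.partMins ↔ ∀ b < a, P.part b ≠ P.part a := by
  simp [partMins]

lemma mem_partMins_of_isMin {a : α} (ha : IsMin a) : a ∈ P.partMins :=
  mem_partMins.2 fun _ hb => absurd hb ha.not_lt

lemma exists_mem_partMins_le (a : α) : ∃ m ∈ P.partMins, m ≤ a ∧ P.part m = P.part a := by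
  have hne : (P.part a).Nonempty := P.part_nonempty.2 (mem_univ a)
  have hmin := (P.part a).min'_mem hne
  have hpart : P.part ((P.part a).min' hne) = P.part a :=
    P.part_eq_of_mem (P.part_mem.2 (mem_univ a)) hmin
  refine ⟨_, mem_partMins.2 fun b hb hba => ?_, (P.part a).min'_le a (P.mem_part (mem_univ a)),
    hpart⟩
  have hb' : b ∈ P.part a := hpart ▸ hba ▸ P.mem_part (mem_univ b)
  exact ((P.part a).min'_le b hb').not_gt hb

variable (P) in
lemma card_partMins : #P.partMins = #P.parts := by
  refine card_nbij P.part (fun a _ => P.part_mem.2 (mem_univ a)) ?_ ?_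
  · intro a ha b hb hab
    rw [mem_coe, mem_partMins] at ha hb
    rcases lt_trichotomy a b with h | h | h
    exacts [absurd hab (hb a h), h, absurd hab.symm (ha b h)]
  · intro B hB
    obtain ⟨a, ha⟩ := P.nonempty_of_mem_parts hB
    obtain ⟨m, hm, -, hma⟩ := P.exists_mem_partMins_le a
    exact ⟨m, hm, hma.trans (P.part_eq_of_mem hB ha)⟩

lemma part_eq_part_iff_forall_partMins (hP : P.IsIntervalPartition) {a b : α} (hab : a ≤ b) :
    P.part a = P.part b ↔ ∀ m ∈ P.partMins, a < m → b < m := by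
  refine ⟨fun h m hm ham => lt_of_not_ge fun hmb => ?_, fun h => ?_⟩
  · exact mem_partMins.1 hm a ham (hP a m b ham.le hmb h).symm
  · obtain ⟨m, hm, hmb, hmb'⟩ := P.exists_mem_partMins_le b
    have hma : m ≤ a := le_of_not_gt fun ham => (h m hm ham).not_ge hmb
    exact (hP m a b hma hab hmb').trans hmb'

lemma eq_of_partMins_eq {Q : Finpartition (univ : Finset α)}
    (hP : P.IsIntervalPartition) (hQ : Q.IsIntervalPartition)
    (h : P.partMins = Q.partMins) : P = Q := by
  refine ext_of_part_eq_part_iff fun a _ b _ => ?_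
  rcases le_total a b with hab | hba
  · rw [part_eq_part_iff_forall_partMins hP hab, part_eq_part_iff_forall_partMins hQ hab, h]
  · rw [eq_comm, part_eq_part_iff_forall_partMins hP hba, @eq_comm _ (Q.part a),
      part_eq_part_iff_forall_partMins hQ hba, h]

end Finpartition

section

variable {n : ℕ}

lemma inSameBlock_iff_part_eq_part {P : SP n} {i j : Fin n} :
    inSameBlock P i j ↔ P.part i = P.part j := by
  refine ⟨fun ⟨B, hB, hi, hj⟩ => ?_, fun h => ?_⟩
  · rw [P.part_eq_of_mem hB hi, P.part_eq_of_mem hB hj]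
  · exact ⟨P.part i, P.part_mem.2 (mem_univ i), P.mem_part (mem_univ i),
      h ▸ P.mem_part (mem_univ j)⟩

lemma avoids13_2_iff {P : SP n} : avoids13_2 P ↔ P.IsIntervalPartition := by
  simp only [avoids13_2, Finpartition.IsIntervalPartition, inSameBlock_iff_part_eq_part,
    not_exists, not_and, not_not]
  refine ⟨fun hP a b c hab hbc hac => ?_,
    fun hP a b c hab hbc hac => (hP a b c hab.le hbc.le hac).symm⟩
  rcases hab.eq_or_lt with rfl | hab
  · rfl
  rcases hbc.eq_or_lt with rfl | hbc
  · exact hac.symm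
  exact (hP a b c hab hbc hac).symm

def cutSet (P : SP n) : Finset (Fin n) := {i ∈ P.partMins | i.val ≠ 0}

lemma card_cutSet (P : SP n) : #(cutSet P) = #P.parts - 1 := by
  rcases n with _ | n
  · have := P.card_parts_le_card
    rw [card_univ, Fintype.card_fin] at this
    rw [eq_empty_of_isEmpty (cutSet P), card_empty]
    omega
  · have hcut : cutSet P = P.partMins.erase 0 := by
      ext i
      simp only [cutSet, mem_filter, mem_erase, ne_eq, Fin.val_eq_zero_iff, and_comm]
    rw [hcut, card_erase_of_mem (Finpartition.mem_partMins_of_isMin fun b _ => Fin.zero_le b),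
      P.card_partMins]

lemma eq_of_cutSet_eq {P Q : SP n} (hP : avoids13_2 P) (hQ : avoids13_2 Q)
    (h : cutSet P = cutSet Q) : P = Q := by
  refine Finpartition.eq_of_partMins_eq (avoids13_2_iff.1 hP) (avoids13_2_iff.1 hQ) ?_
  ext i
  by_cases hi : i.val = 0
  · have hmin : IsMin i := fun b _ => Fin.le_def.2 (hi ▸ Nat.zero_le _)
    simp only [Finpartition.mem_partMins_of_isMin hmin]
  · simpa only [cutSet, mem_filter, ne_eq, hi, not_false_eq_true, and_true] using
      (Finset.ext_iff.1 h i)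

def countLE (S : Finset (Fin n)) (i : Fin n) : ℕ := #{s ∈ S | s ≤ i}

lemma countLE_mono (S : Finset (Fin n)) : Monotone (countLE S) := fun _ _ hij =>
  card_le_card fun _ hs => mem_filter.2 ⟨(mem_filter.1 hs).1, (mem_filter.1 hs).2.trans hij⟩

lemma countLE_lt_of_mem {S : Finset (Fin n)} {i j : Fin n} (hi : i ∈ S) (hji : j < i) :
    countLE S j < countLE S i := by
  refine card_lt_card ⟨fun s hs => ?_, fun hsub => ?_⟩
  · exact mem_filter.2 ⟨(mem_filter.1 hs).1, (mem_filter.1 hs).2.trans hji.le⟩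
  · exact hji.not_ge (mem_filter.1 (hsub (mem_filter.2 ⟨hi, le_rfl⟩))).2

lemma countLE_pred_of_notMem {S : Finset (Fin n)} {i : Fin n} (hi : i ∉ S) :
    countLE S ⟨i.val - 1, by omega⟩ = countLE S i := by
  unfold countLE
  congr 1
  ext s
  simp only [mem_filter, and_congr_right_iff, Fin.le_def]
  intro hs
  have : s.val ≠ i.val := fun h => hi (Fin.ext h ▸ hs)
  omega

open Classical in
noncomputable def layered (S : Finset (Fin n)) : SP n :=
  Finpartition.ofSetoid (Setoid.ker (countLE S))

lemma layered_part_eq_part_iff {S : Finset (Fin n)} {i j : Fin n} :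
    (layered S).part i = (layered S).part j ↔ countLE S i = countLE S j := by
  classical
  exact Finpartition.part_ofSetoid_eq_part_iff

lemma layered_avoids13_2 (S : Finset (Fin n)) : avoids13_2 (layered S) :=
  avoids13_2_iff.2 fun _ _ _ hab hbc hac => by
    rw [layered_part_eq_part_iff] at hac ⊢
    exact le_antisymm (hac ▸ countLE_mono S hbc) (countLE_mono S hab)

lemma cutSet_layered {S : Finset (Fin n)} (hS : ∀ i ∈ S, i.val ≠ 0) :
    cutSet (layered S) = S := by
  ext i
  simp only [cutSet, mem_filter, Finpartition.mem_partMins, ne_eq, layered_part_eq_part_iff]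
  refine ⟨fun ⟨hmin, hi0⟩ => ?_,
    fun hi => ⟨fun j hji => (countLE_lt_of_mem hi hji).ne, hS i hi⟩⟩
  by_contra hi
  exact hmin _ (Fin.lt_def.2 (by simp only; omega)) (countLE_pred_of_notMem hi)

lemma card_filter_val_ne_zero : #{i : Fin n | i.val ≠ 0} = n - 1 := by
  rcases n with _ | n <;> simp [filter_ne']

lemma cutSet_mem_powersetCard {P : SP n} {k : ℕ} (hP : #P.parts = k) :
    cutSet P ∈ powersetCard (k - 1) {i : Fin n | i.val ≠ 0} :=
  mem_powersetCard.2 ⟨fun i hi => mem_filter.2 ⟨mem_univ i, (mem_filter.1 hi).2⟩,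
    hP ▸ card_cutSet P⟩

lemma card_parts_layered {S : Finset (Fin n)} (hS : ∀ i ∈ S, i.val ≠ 0) (hS₀ : S.Nonempty) :
    #(layered S).parts = #S + 1 := by
  have := card_cutSet (layered S)
  rw [cutSet_layered hS] at this
  have := hS₀.card_pos
  omega

end

/-- For `k ≥ 2`, the number of `k`-block set partitions of `[n]` avoiding
the pattern `13/2` equals `C(n-1, k-1)`. -/
theorem stmt2 (n k : ℕ) (hk : 2 ≤ k) :
    Nat.card {P : SP n // P.parts.card = k ∧ avoids13_2 P} = (n - 1).choose (k - 1) := by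
  have hbij : Function.Bijective fun P : {P : SP n // #P.parts = k ∧ avoids13_2 P} =>
      (⟨cutSet P.1, cutSet_mem_powersetCard P.2.1⟩ :
        powersetCard (k - 1) {i : Fin n | i.val ≠ 0}) := by
    refine ⟨fun P Q h => Subtype.ext (eq_of_cutSet_eq P.2.2 Q.2.2 (congrArg Subtype.val h)),
      fun ⟨S, hS⟩ => ?_⟩
    obtain ⟨hS_sub, hS_card⟩ := mem_powersetCard.1 hS
    have hS0 : ∀ i ∈ S, i.val ≠ 0 := fun i hi => (mem_filter.1 (hS_sub hi)).2
    have hparts : #(layered S).parts = k := by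
      rw [card_parts_layered hS0 (card_pos.1 (by omega)), hS_card]
      omega
    exact ⟨⟨layered S, hparts, layered_avoids13_2 S⟩, Subtype.ext (cutSet_layered hS0)⟩
  rw [Nat.card_eq_of_bijective _ hbij, Nat.card_eq_fintype_card, Fintype.card_coe,
    card_powersetCard, card_filter_val_ne_zero]
end

section
/- For k < n, the number of set partitions of [n] with exactly k blocks avoiding the pattern 1/23 equals k, and it equals 1 when k = n. -/
open Finset Polynomial

/-! If `b < c` share a block of a `1/23`-avoiding partition, then so does every `a < b`.
Hence a block with at least two elements is an initial segment `{0, …, t}` together with its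
maximum `m`; all such blocks contain `0`, so there is at most one and every other block is a
singleton. With `k < n` blocks, the big block has `n - k + 1` elements, so it is
`{0, …, n - k - 1} ∪ {m}` for one of the `k` choices `n - k ≤ m < n`. With `k = n` blocks,
every block is a singleton. -/

namespace Finpartition

variable {α : Type*} [DecidableEq α] {s B : Finset α}

def ofBlock (hBs : B ⊆ s) (hB : B.Nonempty) : Finpartition s :=
  (⊥ : Finpartition (s \ B)).extend hB.ne_empty sdiff_disjoint (sdiff_union_of_subset hBs)

lemma mem_ofBlock_parts {hBs : B ⊆ s} {hB : B.Nonempty} {C : Finset α} :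
    C ∈ (ofBlock hBs hB).parts ↔ C = B ∨ ∃ a ∈ s \ B, {a} = C := by
  simp only [ofBlock, extend_parts, mem_insert, mem_bot_iff]

lemma card_ofBlock_parts (hBs : B ⊆ s) (hB : B.Nonempty) :
    #(ofBlock hBs hB).parts = #s - #B + 1 := by
  rw [ofBlock, card_extend, card_bot, card_sdiff_of_subset hBs]

lemma eq_of_ofBlock_eq {B' : Finset α} {hBs : B ⊆ s} {hB : B.Nonempty} {hBs' : B' ⊆ s}
    {hB' : B'.Nonempty} (h : ofBlock hBs hB = ofBlock hBs' hB') (hB1 : 1 < #B) : B = B' := by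
  have hmem : B ∈ (ofBlock hBs' hB').parts := h ▸ mem_ofBlock_parts.2 (Or.inl rfl)
  obtain rfl | ⟨a, -, rfl⟩ := mem_ofBlock_parts.1 hmem
  · rfl
  · simp at hB1

variable (P : Finpartition s)

lemma eq_ofBlock (hB : B ∈ P.parts) (hsing : ∀ C ∈ P.parts, C ≠ B → #C = 1) :
    P = ofBlock (P.le hB) (P.nonempty_of_mem_parts hB) := by
  ext C
  rw [mem_ofBlock_parts]
  constructor
  · intro hC
    by_cases hCB : C = B
    · exact Or.inl hCB
    obtain ⟨a, rfl⟩ := card_eq_one.1 (hsing C hC hCB)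
    refine Or.inr ⟨a, mem_sdiff.2 ⟨P.le hC (mem_singleton_self a), fun haB => ?_⟩, rfl⟩
    exact hCB (P.eq_of_mem_parts hC hB (mem_singleton_self a) haB)
  · rintro (rfl | ⟨a, ha, rfl⟩)
    · exact hB
    obtain ⟨C, hC, haC⟩ := P.exists_mem (mem_sdiff.1 ha).1
    have hCB : C ≠ B := fun h => (mem_sdiff.1 ha).2 (h ▸ haC)
    obtain ⟨b, rfl⟩ := card_eq_one.1 (hsing C hC hCB)
    rwa [mem_singleton.1 haC]

lemma forall_card_eq_one_iff : (∀ C ∈ P.parts, #C = 1) ↔ #P.parts = #s := by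
  rw [← P.sum_card_parts, card_eq_sum_ones,
    sum_eq_sum_iff_of_le fun C hC => card_pos.2 (P.nonempty_of_mem_parts hC)]
  exact forall₂_congr fun _ _ => eq_comm

lemma eq_bot_of_forall_card_eq_one (h : ∀ C ∈ P.parts, #C = 1) : P = ⊥ := by
  ext C
  rw [mem_bot_iff]
  constructor
  · intro hC
    obtain ⟨a, rfl⟩ := card_eq_one.1 (h C hC)
    exact ⟨a, P.le hC (mem_singleton_self a), rfl⟩
  · rintro ⟨a, ha, rfl⟩
    obtain ⟨C, hC, haC⟩ := P.exists_mem ha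
    obtain ⟨b, rfl⟩ := card_eq_one.1 (h C hC)
    rwa [mem_singleton.1 haC]

end Finpartition

section Avoidance

variable {n : ℕ} {P : SP n}

lemma avoids1_23_iff : avoids1_23 P ↔
    ∀ B ∈ P.parts, ∀ ⦃a b c : Fin n⦄, b ∈ B → c ∈ B → a < b → b < c → a ∈ B := by
  constructor
  · intro hP B hB a b c hb hc hab hbc
    by_contra haB
    exact hP ⟨a, b, c, hab, hbc, ⟨B, hB, hb, hc⟩, fun ⟨C, hC, haC, hbC⟩ =>
      haB (P.eq_of_mem_parts hC hB hbC hb ▸ haC)⟩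
  · rintro h ⟨a, b, c, hab, hbc, ⟨B, hB, hb, hc⟩, hab'⟩
    exact hab' ⟨B, hB, h B hB hb hc hab hbc, hb⟩

lemma avoids1_23_bot : avoids1_23 (⊥ : SP n) := by
  rw [avoids1_23_iff]
  rintro B hB a b c hb hc - hbc
  obtain ⟨x, -, rfl⟩ := Finpartition.mem_bot_iff.1 hB
  rw [mem_singleton] at hb hc
  exact absurd (hb.trans hc.symm) hbc.ne

lemma avoids1_23_ofBlock {B : Finset (Fin n)} (hB : B.Nonempty)
    (h : ∀ ⦃a b c : Fin n⦄, b ∈ B → c ∈ B → a < b → b < c → a ∈ B) :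
    avoids1_23 (Finpartition.ofBlock (subset_univ B) hB) := by
  rw [avoids1_23_iff]
  rintro C hC a b c hb hc hab hbc
  obtain rfl | ⟨x, -, rfl⟩ := Finpartition.mem_ofBlock_parts.1 hC
  · exact h hb hc hab hbc
  · rw [mem_singleton] at hb hc
    exact absurd (hb.trans hc.symm) hbc.ne

lemma exists_eq_insert_Iic_of_avoids1_23 (hP : avoids1_23 P) {B : Finset (Fin n)}
    (hB : B ∈ P.parts) (hB1 : 1 < #B) : ∃ t m : Fin n, t < m ∧ B = insert m (Iic t) := by
  have hne : B.Nonempty := card_pos.1 (by omega)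
  have hmB : B.max' hne ∈ B := B.max'_mem hne
  have hne' : (B.erase (B.max' hne)).Nonempty := by
    rw [← card_pos, card_erase_of_mem hmB]; omega
  set m := B.max' hne
  set t := (B.erase m).max' hne'
  have htB : t ∈ B := mem_of_mem_erase ((B.erase m).max'_mem hne')
  have htm : t < m := (B.le_max' t htB).lt_of_ne (ne_of_mem_erase ((B.erase m).max'_mem hne'))
  refine ⟨t, m, htm, ext fun x => ?_⟩
  rw [mem_insert, mem_Iic]
  constructor
  · intro hx
    by_cases hxm : x = m
    · exact Or.inl hxm
    · exact Or.inr ((B.erase m).le_max' x (mem_erase.2 ⟨hxm, hx⟩))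
  · rintro (rfl | hxt)
    · exact hmB
    rcases hxt.lt_or_eq with hxt | rfl
    · exact avoids1_23_iff.1 hP B hB htB hmB hxt htm
    · exact htB

lemma eq_of_avoids1_23_of_one_lt_card (hP : avoids1_23 P) {B C : Finset (Fin n)}
    (hB : B ∈ P.parts) (hC : C ∈ P.parts) (hB1 : 1 < #B) (hC1 : 1 < #C) : B = C := by
  obtain ⟨t, m, -, rfl⟩ := exists_eq_insert_Iic_of_avoids1_23 hP hB hB1
  obtain ⟨t', m', -, rfl⟩ := exists_eq_insert_Iic_of_avoids1_23 hP hC hC1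
  exact P.eq_of_mem_parts hB hC (mem_insert_of_mem (mem_Iic.2 (min_le_left t t')))
    (mem_insert_of_mem (mem_Iic.2 (min_le_right t t')))

end Avoidance

section Counting

variable {n k : ℕ}

def prefixBlock (k : ℕ) (m : Fin n) : Finset (Fin n) :=
  insert m (univ.filter fun x : Fin n => (x : ℕ) < n - k)

lemma prefixBlock_nonempty (k : ℕ) (m : Fin n) : (prefixBlock k m).Nonempty :=
  insert_nonempty _ _

def prefixPartition (k : ℕ) (m : Fin n) : SP n :=
  Finpartition.ofBlock (subset_univ _) (prefixBlock_nonempty k m)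

lemma card_prefixBlock {m : Fin n} (hm : n - k ≤ m) : #(prefixBlock k m) = n - k + 1 := by
  rw [prefixBlock, card_insert_of_notMem (by simpa using hm), Fin.card_filter_val_lt]
  omega

lemma card_prefixPartition_parts (hk : k ≤ n) {m : Fin n} (hm : n - k ≤ m) :
    #(prefixPartition k m).parts = k := by
  rw [prefixPartition, Finpartition.card_ofBlock_parts, card_prefixBlock hm, card_univ,
    Fintype.card_fin]
  have := m.isLt
  omega

lemma avoids1_23_prefixPartition (m : Fin n) : avoids1_23 (prefixPartition k m) := by
  refine avoids1_23_ofBlock _ fun a b c hb hc hab hbc => ?_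
  simp only [prefixBlock, mem_insert, mem_filter, mem_univ, true_and, Fin.ext_iff,
    Fin.lt_def] at hb hc hab hbc ⊢
  omega

lemma prefixPartition_injOn (hk : k < n) :
    Set.InjOn (prefixPartition (n := n) k) {m | n - k ≤ m} := by
  intro m (hm : n - k ≤ m) m' _ h
  have hblock := Finpartition.eq_of_ofBlock_eq h (by rw [card_prefixBlock hm]; omega)
  have hmem : m ∈ prefixBlock k m' := hblock ▸ mem_insert_self m _
  simp only [prefixBlock, mem_insert, mem_filter, mem_univ, true_and] at hmem
  exact hmem.resolve_right (by omega)

lemma exists_eq_prefixPartition (hk : k < n) {P : SP n} (hcard : #P.parts = k)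
    (hP : avoids1_23 P) : ∃ m : Fin n, n - k ≤ m ∧ P = prefixPartition k m := by
  obtain ⟨B, hB, hB1⟩ : ∃ B ∈ P.parts, 1 < #B := by
    have : ¬ ∀ C ∈ P.parts, #C = 1 := by
      rw [Finpartition.forall_card_eq_one_iff, hcard, card_univ, Fintype.card_fin]
      exact hk.ne
    push Not at this
    obtain ⟨C, hC, hC1⟩ := this
    have := card_pos.2 (P.nonempty_of_mem_parts hC)
    exact ⟨C, hC, by omega⟩
  have hsing : ∀ C ∈ P.parts, C ≠ B → #C = 1 := by
    intro C hC hCB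
    by_contra hC1
    have := card_pos.2 (P.nonempty_of_mem_parts hC)
    exact hCB (eq_of_avoids1_23_of_one_lt_card hP hC hB (by omega) hB1)
  have hPB := P.eq_ofBlock hB hsing
  have hcardB : #B = n - k + 1 := by
    have := Finpartition.card_ofBlock_parts (P.le hB) (P.nonempty_of_mem_parts hB)
    rw [← hPB, hcard, card_univ, Fintype.card_fin] at this
    have := card_le_univ B
    rw [Fintype.card_fin] at this
    omega
  obtain ⟨t, m, htm, hBtm⟩ := exists_eq_insert_Iic_of_avoids1_23 hP hB hB1
  have ht : t.val + 2 = n - k + 1 := by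
    rw [← hcardB, hBtm, card_insert_of_notMem (by simpa using htm), Fin.card_Iic]
  have hBm : B = prefixBlock k m := by
    rw [hBtm]
    ext x
    simp only [prefixBlock, mem_insert, mem_Iic, mem_filter, mem_univ, true_and, Fin.le_def]
    omega
  subst hBm
  exact ⟨m, by rw [Fin.lt_def] at htm; omega, hPB⟩

lemma card_subtype_sub_le_val (hk : k ≤ n) : Nat.card {m : Fin n // n - k ≤ m} = k := by
  have := card_filter_add_card_filter_not (s := univ) fun m : Fin n => (m : ℕ) < n - k
  simp only [Fin.card_filter_val_lt, not_lt, card_univ, Fintype.card_fin] at this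
  rw [Nat.card_eq_fintype_card, Fintype.card_subtype]
  omega

lemma card_avoids1_23_of_lt (hk : k < n) :
    Nat.card {P : SP n // #P.parts = k ∧ avoids1_23 P} = k := by
  let f : {m : Fin n // n - k ≤ m} → {P : SP n // #P.parts = k ∧ avoids1_23 P} :=
    fun m => ⟨prefixPartition k m, card_prefixPartition_parts hk.le m.2,
      avoids1_23_prefixPartition m.1⟩
  have hf : Function.Bijective f := by
    refine ⟨fun m m' h => Subtype.ext (prefixPartition_injOn hk m.2 m'.2 ?_), ?_⟩
    · simpa [f] using h
    rintro ⟨P, hcard, hP⟩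
    obtain ⟨m, hm, rfl⟩ := exists_eq_prefixPartition hk hcard hP
    exact ⟨⟨m, hm⟩, rfl⟩
  rw [← Nat.card_eq_of_bijective f hf, card_subtype_sub_le_val hk.le]

lemma card_avoids1_23_self :
    Nat.card {P : SP n // #P.parts = n ∧ avoids1_23 P} = 1 := by
  have hcard : #(univ : Finset (Fin n)) = n := card_fin n
  rw [Nat.card_eq_one_iff_unique]
  refine ⟨⟨fun ⟨P, hP, _⟩ ⟨Q, hQ, _⟩ => ?_⟩, ⟨⊥, ?_, avoids1_23_bot⟩⟩
  · simp only [Subtype.mk.injEq]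
    rw [P.eq_bot_of_forall_card_eq_one (P.forall_card_eq_one_iff.2 (hP.trans hcard.symm)),
      Q.eq_bot_of_forall_card_eq_one (Q.forall_card_eq_one_iff.2 (hQ.trans hcard.symm))]
  · rw [Finpartition.card_bot, hcard]

end Counting

/-- For `k < n`, the number of `k`-block set partitions of `[n]` avoiding
`1/23` equals `k`, and it equals `1` when `k = n`. -/
theorem stmt3 (n k : ℕ) :
    (k < n → Nat.card {P : SP n // P.parts.card = k ∧ avoids1_23 P} = k) ∧
    (k = n → Nat.card {P : SP n // P.parts.card = k ∧ avoids1_23 P} = 1) :=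
  ⟨card_avoids1_23_of_lt, fun h => h ▸ card_avoids1_23_self⟩
end

section
/- For k < n, the number of set partitions of [n] with exactly k blocks avoiding the pattern 12/3 equals k, and it equals 1 when k = n. -/
open Finset Polynomial

/-!
If `a < x` lie in one block of a `12/3`-avoiding partition, every `y > x` lies in that block too.
So let `m` be the first element sharing its block with an earlier element `a`: the elements below
`m` lie in distinct blocks and everything from `m` on joins the block of `a`, i.e. the partition is
`{0}, …, {a} ∪ {m, …, n - 1}, …, {m - 1}` and has `m < n` blocks. If there is no such `m`, the
partition is discrete and has `n` blocks. Hence the `k`-block avoiders are indexed by `a < k` when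
`k < n`, and the discrete partition is the only one when `k = n`.
-/

-- Stated so that it is syntactically the instance found from a local `DecidableEq β`;
-- otherwise `rw` cannot match `ofSetoid (Setoid.ker f)` against concrete instances.
instance {α β : Type*} [DecidableEq β] (f : α → β) : DecidableRel (Setoid.ker f) :=
  fun x y => ‹DecidableEq β› (f x) (f y)

lemma Finpartition.card_parts_ofSetoid_ker {α β : Type*} [Fintype α] [DecidableEq α]
    [DecidableEq β] (f : α → β) :
    (Finpartition.ofSetoid (Setoid.ker f)).parts.card = (univ.image f).card := by
  have hfib : (Finpartition.ofSetoid (Setoid.ker f)).parts =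
      (univ.image f).image fun v => univ.filter (v = f ·) := by
    simp only [Finpartition.ofSetoid, Finpartition.ofSetSetoid_parts, Setoid.ker_def,
      Finset.image_image, Function.comp_def]
  rw [hfib]
  refine Finset.card_image_of_injOn fun v hv w _ hvw => ?_
  obtain ⟨a, -, rfl⟩ := Finset.mem_image.mp hv
  have ha : a ∈ univ.filter (w = f ·) := hvw ▸ Finset.mem_filter.mpr ⟨mem_univ a, rfl⟩
  exact (Finset.mem_filter.mp ha).2.symm

section

variable {n : ℕ}

lemma inSameBlock_iff_part_eq (P : SP n) (i j : Fin n) :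
    inSameBlock P i j ↔ P.part i = P.part j := by
  constructor
  · rintro ⟨B, hB, hi, hj⟩
    rw [P.part_eq_of_mem hB hi, P.part_eq_of_mem hB hj]
  · intro h
    exact ⟨P.part j, P.part_mem.mpr (mem_univ j), h ▸ P.mem_part (mem_univ i),
      P.mem_part (mem_univ j)⟩

lemma eq_of_inSameBlock_iff {P Q : SP n} (h : ∀ i j, inSameBlock P i j ↔ inSameBlock Q i j) :
    P = Q := by
  have hpart : P.part = Q.part := by
    ext i j
    simpa only [Finpartition.mem_part_iff_exists, inSameBlock] using h j i
  ext B
  constructor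
  · intro hB
    obtain ⟨i, -, rfl⟩ := P.part_surjOn hB
    exact hpart ▸ Q.part_mem.mpr (mem_univ i)
  · intro hB
    obtain ⟨i, -, rfl⟩ := Q.part_surjOn hB
    exact hpart ▸ P.part_mem.mpr (mem_univ i)

lemma inSameBlock_bot (i j : Fin n) : inSameBlock ⊥ i j ↔ i = j := by
  simp [inSameBlock, eq_comm]

lemma card_parts_bot_eq : (⊥ : SP n).parts.card = n := by
  rw [Finpartition.card_bot, card_univ, Fintype.card_fin]

lemma avoids12_3_bot : avoids12_3 (⊥ : SP n) := by
  rintro ⟨a, b, -, hab, -, hsame, -⟩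
  exact hab.ne ((inSameBlock_bot a b).mp hsame)

def tailLabel (k j : ℕ) (x : Fin n) : ℕ := if (x : ℕ) < k then x else j

/-- The partition `{0}, …, {j} ∪ {k, …, n - 1}, …, {k - 1}`, whose restricted growth function is
`1 2 ⋯ k (j+1) ⋯ (j+1)`. -/
def tailPartition (n k j : ℕ) : SP n := Finpartition.ofSetoid (Setoid.ker (tailLabel k j))

lemma inSameBlock_tailPartition {k j : ℕ} {x y : Fin n} :
    inSameBlock (tailPartition n k j) x y ↔ tailLabel k j x = tailLabel k j y := by
  rw [inSameBlock, ← Finpartition.mem_part_iff_exists, tailPartition,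
    Finpartition.mem_part_ofSetoid_iff_rel, Setoid.ker_def, eq_comm]

lemma image_tailLabel {k j : ℕ} (hjk : j < k) (hkn : k ≤ n) :
    univ.image (tailLabel (n := n) k j) = range k := by
  ext v
  simp only [mem_image, mem_univ, true_and, mem_range]
  constructor
  · rintro ⟨x, rfl⟩
    unfold tailLabel
    split_ifs with hx <;> assumption
  · intro hv
    exact ⟨⟨v, hv.trans_le hkn⟩, if_pos hv⟩

lemma card_parts_tailPartition {k j : ℕ} (hjk : j < k) (hkn : k ≤ n) :
    (tailPartition n k j).parts.card = k := by
  rw [tailPartition, Finpartition.card_parts_ofSetoid_ker, image_tailLabel hjk hkn, card_range]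

lemma avoids12_3_tailPartition (k j : ℕ) : avoids12_3 (tailPartition n k j) := by
  rintro ⟨a, b, c, hab, hbc, hsame, hdiff⟩
  rw [inSameBlock_tailPartition] at hsame hdiff
  unfold tailLabel at hsame hdiff
  split_ifs at hsame hdiff <;> omega

lemma tailPartition_injOn {k : ℕ} (hkn : k < n) : Set.InjOn (tailPartition n k) (Set.Iio k) := by
  intro j hj j' hj' h
  rw [Set.mem_Iio] at hj hj'
  have hsame : inSameBlock (tailPartition n k j) ⟨j, hj.trans hkn⟩ ⟨k, hkn⟩ := by
    simp [inSameBlock_tailPartition, tailLabel, hj]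
  rw [h, inSameBlock_tailPartition] at hsame
  simpa [tailLabel, hj] using hsame

lemma avoids12_3.part_eq_of_le {P : SP n} (hP : avoids12_3 P) {a x y : Fin n} (hax : a < x)
    (hpart : P.part a = P.part x) (hxy : x ≤ y) : P.part y = P.part a := by
  rcases hxy.eq_or_lt with rfl | hxy
  · exact hpart.symm
  by_contra hne
  exact hP ⟨a, x, y, hax, hxy, (inSameBlock_iff_part_eq P a x).mpr hpart,
    fun h => hne ((inSameBlock_iff_part_eq P a y).mp h).symm⟩

lemma avoids12_3.eq_tailPartition {P : SP n} (hP : avoids12_3 P) {a m : Fin n} (ham : a < m)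
    (hpart : P.part a = P.part m) (hmin : ∀ x y, x < y → y < m → P.part x ≠ P.part y) :
    P = tailPartition n m a := by
  have hup : ∀ y, m ≤ y → P.part y = P.part a := fun y => hP.part_eq_of_le ham hpart
  have hinj : ∀ x y, x < m → y < m → P.part x = P.part y → x = y := by
    intro x y hx hy h
    rcases lt_trichotomy x y with hxy | rfl | hxy
    · exact absurd h (hmin x y hxy hy)
    · rfl
    · exact absurd h.symm (hmin y x hxy hx)
  refine eq_of_inSameBlock_iff fun x y => ?_
  rw [inSameBlock_iff_part_eq, inSameBlock_tailPartition]
  unfold tailLabel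
  split_ifs with hx hy hy
  · exact ⟨fun h => congrArg Fin.val (hinj x y hx hy h), fun h => by rw [Fin.ext h]⟩
  · rw [hup y (not_lt.mp hy)]
    exact ⟨fun h => congrArg Fin.val (hinj x a hx ham h), fun h => by rw [Fin.ext h]⟩
  · rw [hup x (not_lt.mp hx)]
    exact ⟨fun h => congrArg Fin.val (hinj a y ham hy h), fun h => by rw [Fin.ext h]⟩
  · simp only [hup x (not_lt.mp hx), hup y (not_lt.mp hy)]

theorem avoids12_3_iff {P : SP n} :
    avoids12_3 P ↔ P = ⊥ ∨ ∃ m j, j < m ∧ m < n ∧ P = tailPartition n m j := by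
  refine ⟨fun hP => ?_, ?_⟩
  · by_cases hrep : ∃ x a : Fin n, a < x ∧ P.part a = P.part x
    · obtain ⟨m, ⟨a, ham, hpart⟩, hmin⟩ := wellFounded_lt.has_min _ hrep
      exact Or.inr ⟨m, a, ham, m.isLt, hP.eq_tailPartition ham hpart
        fun x y hxy hym h => hmin y ⟨x, hxy, h⟩ hym⟩
    · refine Or.inl (eq_of_inSameBlock_iff fun x y => ?_)
      rw [inSameBlock_iff_part_eq, inSameBlock_bot]
      refine ⟨fun h => ?_, fun h => h ▸ rfl⟩
      rcases lt_trichotomy x y with hxy | hxy | hxy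
      · exact absurd ⟨y, x, hxy, h⟩ hrep
      · exact hxy
      · exact absurd ⟨x, y, hxy, h.symm⟩ hrep
  · rintro (rfl | ⟨m, j, -, -, rfl⟩)
    exacts [avoids12_3_bot, avoids12_3_tailPartition m j]

theorem card_avoids12_3_of_lt {k : ℕ} (hkn : k < n) :
    Nat.card {P : SP n // P.parts.card = k ∧ avoids12_3 P} = k := by
  let e : Fin k → {P : SP n // P.parts.card = k ∧ avoids12_3 P} := fun j =>
    ⟨tailPartition n k j, card_parts_tailPartition j.isLt hkn.le, avoids12_3_tailPartition k j⟩
  have he : Function.Bijective e := by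
    refine ⟨fun j j' h => Fin.ext (tailPartition_injOn hkn j.isLt j'.isLt (congrArg Subtype.val h)),
      ?_⟩
    rintro ⟨P, hcard, hP⟩
    rcases avoids12_3_iff.mp hP with rfl | ⟨m, j, hjm, hmn, rfl⟩
    · rw [card_parts_bot_eq] at hcard
      omega
    · rw [card_parts_tailPartition hjm hmn.le] at hcard
      subst hcard
      exact ⟨⟨j, hjm⟩, rfl⟩
  rw [← Nat.card_eq_of_bijective e he, Nat.card_fin]

theorem card_avoids12_3_self : Nat.card {P : SP n // P.parts.card = n ∧ avoids12_3 P} = 1 := by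
  refine Nat.card_eq_one_iff_exists.mpr ⟨⟨⊥, card_parts_bot_eq, avoids12_3_bot⟩, ?_⟩
  rintro ⟨P, hcard, hP⟩
  refine Subtype.ext ?_
  rcases avoids12_3_iff.mp hP with h | ⟨m, j, hjm, hmn, rfl⟩
  · exact h
  · rw [card_parts_tailPartition hjm hmn.le] at hcard
    omega

end

/-- For `k < n`, the number of `k`-block set partitions of `[n]` avoiding
`12/3` equals `k`, and it equals `1` when `k = n`. -/
theorem stmt4 (n k : ℕ) :
    (k < n → Nat.card {P : SP n // P.parts.card = k ∧ avoids12_3 P} = k) ∧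
    (k = n → Nat.card {P : SP n // P.parts.card = k ∧ avoids12_3 P} = 1) :=
  ⟨card_avoids12_3_of_lt, fun h => h ▸ card_avoids12_3_self⟩
end

section
/- A set partition of [n] avoids both patterns 13/2 and 123 if and only if its restricted growth function is layered with each layer of size at most 2; consequently, the number of such partitions with exactly k blocks is the number of words 1^{l_1}⋯k^{l_k} with each l_i ∈ {1,2} and Σl_i = n, which equals C(k, n-k). -/
open Finset Polynomial

set_option maxHeartbeats 1000000
section Aux

variable {n : ℕ} (P : SP n)

lemma blockOf_eq_part (i : Fin n) : blockOf P i = P.part i := by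
  have h1 : P.parts.filter (fun B => i ∈ B) = {P.part i} := by
    apply Finset.eq_singleton_iff_unique_mem.2
    refine ⟨Finset.mem_filter.2 ⟨P.part_mem.2 (Finset.mem_univ i), P.mem_part (Finset.mem_univ i)⟩,
      fun B hB => ?_⟩
    rw [Finset.mem_filter] at hB
    exact (P.part_eq_of_mem hB.1 hB.2).symm
  rw [blockOf, h1, Finset.sup_singleton, id]

lemma inSameBlock_iff {i j : Fin n} : inSameBlock P i j ↔ P.part i = P.part j := by
  constructor
  · rintro ⟨B, hB, hi, hj⟩
    rw [P.part_eq_of_mem hB hi, P.part_eq_of_mem hB hj]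
  · intro h
    exact ⟨P.part i, P.part_mem.2 (Finset.mem_univ i), P.mem_part (Finset.mem_univ i),
      h ▸ P.mem_part (Finset.mem_univ j)⟩

lemma part_nonempty (i : Fin n) : (P.part i).Nonempty :=
  ⟨i, P.mem_part (Finset.mem_univ i)⟩

lemma min_inj {B C : Finset (Fin n)} (hB : B ∈ P.parts) (hC : C ∈ P.parts)
    (h : B.min = C.min) : B = C := by
  have hBne := P.nonempty_of_mem_parts hB
  have hCne := P.nonempty_of_mem_parts hC
  have h1 : B.min' hBne ∈ B := Finset.min'_mem _ _
  have h2 : C.min' hCne ∈ C := Finset.min'_mem _ _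
  have : B.min' hBne = C.min' hCne := by
    have := h
    rw [← Finset.coe_min' hBne, ← Finset.coe_min' hCne] at this
    exact_mod_cast this
  exact P.eq_of_mem_parts hB hC h1 (this ▸ h2)

lemma rgf_def (i : Fin n) :
    rgf P i = (P.parts.filter (fun B => B.min ≤ (P.part i).min)).card := by
  rw [rgf, blockOf_eq_part]

lemma rgf_le_rgf_iff {i j : Fin n} :
    rgf P i ≤ rgf P j ↔ (P.part i).min ≤ (P.part j).min := by
  constructor
  · intro h
    by_contra hm
    push_neg at hm
    have hsub : P.parts.filter (fun B => B.min ≤ (P.part j).min) ⊂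
        P.parts.filter (fun B => B.min ≤ (P.part i).min) := by
      refine Finset.ssubset_iff_of_subset
        (Finset.monotone_filter_right _ (fun B _ hB => le_trans hB hm.le)) |>.2
        ⟨P.part i, Finset.mem_filter.2 ⟨P.part_mem.2 (Finset.mem_univ i), le_refl _⟩, ?_⟩
      rw [Finset.mem_filter]
      push_neg
      exact fun _ => hm
    have := Finset.card_lt_card hsub
    rw [← rgf_def, ← rgf_def] at this
    omega
  · intro h
    rw [rgf_def, rgf_def]
    apply Finset.card_le_card
    exact Finset.monotone_filter_right _ (fun B _ hB => le_trans hB h)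

end Aux

section Aux2

variable {n : ℕ} (P : SP n)

lemma rgf_eq_iff {i j : Fin n} : rgf P i = rgf P j ↔ P.part i = P.part j := by
  constructor
  · intro h
    have h1 := (rgf_le_rgf_iff P).1 h.le
    have h2 := (rgf_le_rgf_iff P).1 h.ge
    exact min_inj P (P.part_mem.2 (Finset.mem_univ i)) (P.part_mem.2 (Finset.mem_univ j))
      (le_antisymm h1 h2)
  · intro h
    rw [rgf_def, rgf_def, h]

lemma fiber_rgf (i : Fin n) :
    Finset.univ.filter (fun x => rgf P x = rgf P i) = P.part i := by
  ext x
  simp only [Finset.mem_filter, Finset.mem_univ, true_and]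
  rw [rgf_eq_iff]
  exact (P.mem_part_iff_part_eq_part (Finset.mem_univ x) (Finset.mem_univ i)).symm

lemma one_le_rgf (i : Fin n) : 1 ≤ rgf P i := by
  rw [rgf_def, Nat.one_le_iff_ne_zero, ← Nat.pos_iff_ne_zero, Finset.card_pos]
  exact ⟨P.part i, Finset.mem_filter.2 ⟨P.part_mem.2 (Finset.mem_univ i), le_refl _⟩⟩

lemma rgf_le_card (i : Fin n) : rgf P i ≤ P.parts.card := by
  rw [rgf_def]
  exact Finset.card_le_card (Finset.filter_subset _ _)

lemma card_image_rgf : (Finset.univ.image (rgf P)).card = P.parts.card := by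
  symm
  apply Finset.card_bij (fun B hB => rgf P (B.min' (P.nonempty_of_mem_parts hB)))
  · intro B hB
    exact Finset.mem_image.2 ⟨_, Finset.mem_univ _, rfl⟩
  · intro B hB C hC h
    rw [rgf_eq_iff] at h
    rw [P.part_eq_of_mem hB (Finset.min'_mem _ _), P.part_eq_of_mem hC (Finset.min'_mem _ _)] at h
    exact h
  · intro v hv
    obtain ⟨i, _, rfl⟩ := Finset.mem_image.1 hv
    refine ⟨P.part i, P.part_mem.2 (Finset.mem_univ i), ?_⟩
    rw [rgf_eq_iff]
    exact P.part_eq_of_mem (P.part_mem.2 (Finset.mem_univ i)) (Finset.min'_mem _ _)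

lemma image_rgf_eq : Finset.univ.image (rgf P) = Finset.Icc 1 P.parts.card := by
  apply Finset.eq_of_subset_of_card_le
  · intro v hv
    obtain ⟨i, _, rfl⟩ := Finset.mem_image.1 hv
    exact Finset.mem_Icc.2 ⟨one_le_rgf P i, rgf_le_card P i⟩
  · rw [Nat.card_Icc, card_image_rgf]
    omega

lemma eq_of_rgf_eq {Q : SP n} (h : rgf P = rgf Q) : P = Q := by
  have key : ∀ (R S : SP n), rgf R = rgf S → R.parts ⊆ S.parts := by
    intro R S hRS B hB
    obtain ⟨x, hx⟩ := R.nonempty_of_mem_parts hB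
    have h1 : B = R.part x := (R.part_eq_of_mem hB hx).symm
    have h2 : R.part x = S.part x := by
      rw [← fiber_rgf R x, ← fiber_rgf S x, hRS]
    rw [h1, h2]
    exact S.part_mem.2 (Finset.mem_univ x)
  exact Finpartition.ext (Finset.Subset.antisymm (key P Q h) (key Q P h.symm))

end Aux2

section Char

variable {n : ℕ} (P : SP n)

theorem char_iff :
    (avoids13_2 P ∧ avoids123 P) ↔
      ((∀ i j : Fin n, i ≤ j → rgf P i ≤ rgf P j) ∧
        ∀ v : ℕ, (Finset.univ.filter (fun i => rgf P i = v)).card ≤ 2) := by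
  constructor
  · rintro ⟨h132, h123⟩
    constructor
    · intro i j hij
      by_contra h
      push_neg at h
      have hne : rgf P i ≠ rgf P j := by omega
      have hij' : i < j := lt_of_le_of_ne hij (by rintro rfl; omega)
      have hmin : (P.part j).min < (P.part i).min := by
        by_contra hm
        push_neg at hm
        exact absurd ((rgf_le_rgf_iff P).2 hm) (by omega)
      set a := (P.part j).min' (part_nonempty P j) with ha
      have haj : a ∈ P.part j := Finset.min'_mem _ _
      have hai : a < i := by
        have h1 : ((P.part j).min : WithTop (Fin n)) = (a : WithTop (Fin n)) :=
          (Finset.coe_min' _).symm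
        have h2 : (P.part i).min ≤ (i : WithTop (Fin n)) :=
          Finset.min_le (P.mem_part (Finset.mem_univ i))
        have := lt_of_lt_of_le hmin h2
        rw [h1] at this
        exact_mod_cast this
      apply h132
      refine ⟨a, i, j, hai, hij', ?_, ?_⟩
      · exact ⟨P.part j, P.part_mem.2 (Finset.mem_univ j), haj, P.mem_part (Finset.mem_univ j)⟩
      · rw [inSameBlock_iff]
        intro hcontra
        rw [P.part_eq_of_mem (P.part_mem.2 (Finset.mem_univ j)) haj] at hcontra
        exact hmin.ne' (by rw [hcontra])
    · intro v
      rcases Finset.eq_empty_or_nonempty (Finset.univ.filter (fun i => rgf P i = v)) with he | hne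
      · simp [he]
      · obtain ⟨i, hi⟩ := hne
        rw [Finset.mem_filter] at hi
        have : Finset.univ.filter (fun x => rgf P x = v) = P.part i := by
          rw [← hi.2, fiber_rgf]
        rw [this]
        exact h123 _ (P.part_mem.2 (Finset.mem_univ i))
  · rintro ⟨hmono, hfib⟩
    constructor
    · rintro ⟨a, b, c, hab, hbc, hac, hnab⟩
      rw [inSameBlock_iff] at hac hnab
      have h1 : rgf P a = rgf P c := (rgf_eq_iff P).2 hac
      have h2 := hmono a b hab.le
      have h3 := hmono b c hbc.le
      have : rgf P a = rgf P b := by omega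
      exact hnab ((rgf_eq_iff P).1 this)
    · intro B hB
      obtain ⟨x, hx⟩ := P.nonempty_of_mem_parts hB
      have : B = P.part x := (P.part_eq_of_mem hB hx).symm
      rw [this, ← fiber_rgf]
      exact hfib (rgf P x)

end Char

section Mono

open Finset

lemma lowerset_mem_iff {n : ℕ} (S : Finset (Fin n))
    (hS : ∀ i j : Fin n, i ≤ j → j ∈ S → i ∈ S) (i : Fin n) :
    i ∈ S ↔ i.val < S.card := by
  constructor
  · intro hi
    have hsub : Finset.Iic i ⊆ S := fun j hj => hS j i (Finset.mem_Iic.1 hj) hi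
    have := Finset.card_le_card hsub
    rw [Fin.card_Iic] at this
    omega
  · intro hi
    by_contra hmem
    have hsub : S ⊆ Finset.Iio i := by
      intro j hj
      rw [Finset.mem_Iio]
      by_contra hji
      push_neg at hji
      exact hmem (hS i j hji hj)
    have := Finset.card_le_card hsub
    rw [Fin.card_Iio] at this
    omega

lemma mono_eq_of_fibers {n : ℕ} (f g : Fin n → ℕ)
    (hf : ∀ i j : Fin n, i ≤ j → f i ≤ f j) (hg : ∀ i j : Fin n, i ≤ j → g i ≤ g j)
    (hfib : ∀ v : ℕ, (Finset.univ.filter (fun i => f i = v)).card =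
      (Finset.univ.filter (fun i => g i = v)).card) : f = g := by
  have hc : ∀ v : ℕ, (Finset.univ.filter (fun i : Fin n => f i ≤ v)).card =
      (Finset.univ.filter (fun i : Fin n => g i ≤ v)).card := by
    intro v
    have key : ∀ h : Fin n → ℕ, (Finset.univ.filter (fun i : Fin n => h i ≤ v)).card =
        ∑ b ∈ Finset.range (v + 1), (Finset.univ.filter (fun i : Fin n => h i = b)).card := by
      intro h
      rw [Finset.card_eq_sum_card_fiberwise (f := h) (t := Finset.range (v + 1))
        (fun x hx => Finset.mem_range.2 (by
          rw [Finset.mem_coe, Finset.mem_filter] at hx; omega))]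
      apply Finset.sum_congr rfl
      intro b hb
      rw [Finset.mem_range] at hb
      congr 1
      ext x
      simp only [Finset.mem_filter, Finset.mem_univ, true_and]
      constructor
      · exact fun h' => h'.2
      · intro h'; exact ⟨by omega, h'⟩
    rw [key f, key g]
    exact Finset.sum_congr rfl fun b _ => hfib b
  have hle : ∀ h : Fin n → ℕ, (∀ i j : Fin n, i ≤ j → h i ≤ h j) → ∀ (i : Fin n) (v : ℕ),
      (h i ≤ v ↔ i.val < (Finset.univ.filter (fun x : Fin n => h x ≤ v)).card) := by
    intro h hm i v
    have := lowerset_mem_iff (Finset.univ.filter (fun x : Fin n => h x ≤ v))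
      (fun a b hab hb => by
        rw [Finset.mem_filter] at hb ⊢
        exact ⟨Finset.mem_univ a, le_trans (hm a b hab) hb.2⟩) i
    simpa using this
  funext i
  apply le_antisymm
  · rw [hle f hf i (g i), hc (g i), ← hle g hg i (g i)]
  · rw [hle g hg i (f i), ← hc (f i), ← hle f hf i (f i)]

lemma card_val_interval {n : ℕ} (a b : ℕ) (hb : b ≤ n) :
    (Finset.univ.filter (fun i : Fin n => a ≤ i.val ∧ i.val < b)).card = b - a := by
  have himg : (Finset.univ.filter (fun i : Fin n => a ≤ i.val ∧ i.val < b)).image Fin.val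
      = Finset.Ico a b := by
    ext x
    simp only [Finset.mem_image, Finset.mem_filter, Finset.mem_univ, true_and, Finset.mem_Ico]
    constructor
    · rintro ⟨i, hi, rfl⟩; exact hi
    · rintro ⟨h1, h2⟩; exact ⟨⟨x, lt_of_lt_of_le h2 hb⟩, ⟨h1, h2⟩, rfl⟩
  rw [← Nat.card_Ico, ← himg, Finset.card_image_of_injective _ Fin.val_injective]

end Mono

section NormalForm

variable {n : ℕ}

/-- If `f` is monotone and its kernel is the partition `P`, then `rgf P i` counts the values
of `f` that are `≤ f i`. -/
lemma rgf_eq_count (P : SP n) (f : Fin n → ℕ)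
    (hker : ∀ i j : Fin n, f i = f j ↔ P.part i = P.part j)
    (hmono : ∀ i j : Fin n, i ≤ j → f i ≤ f j) (i : Fin n) :
    rgf P i = ((Finset.univ.image f).filter (fun v => v ≤ f i)).card := by
  -- the value of f on a part
  have hval : ∀ (B : Finset (Fin n)) (hB : B ∈ P.parts) (x : Fin n), x ∈ B →
      f x = f (B.min' (P.nonempty_of_mem_parts hB)) := by
    intro B hB x hx
    rw [hker]
    rw [P.part_eq_of_mem hB hx, P.part_eq_of_mem hB (Finset.min'_mem _ _)]
  -- comparing minima of parts via f
  have hminlt : ∀ (B C : Finset (Fin n)) (hB : B ∈ P.parts) (hC : C ∈ P.parts),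
      B.min ≤ C.min ↔ f (B.min' (P.nonempty_of_mem_parts hB)) ≤
        f (C.min' (P.nonempty_of_mem_parts hC)) := by
    intro B C hB hC
    constructor
    · intro h
      apply hmono
      have h' := h
      rw [← Finset.coe_min' (P.nonempty_of_mem_parts hB),
        ← Finset.coe_min' (P.nonempty_of_mem_parts hC)] at h'
      exact_mod_cast h'
    · intro h
      by_contra hm
      push_neg at hm
      have hlt : C.min' (P.nonempty_of_mem_parts hC) < B.min' (P.nonempty_of_mem_parts hB) := by
        have h' := hm
        rw [← Finset.coe_min' (P.nonempty_of_mem_parts hB),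
          ← Finset.coe_min' (P.nonempty_of_mem_parts hC)] at h'
        exact_mod_cast h'
      have hle := hmono _ _ hlt.le
      have hne : f (C.min' (P.nonempty_of_mem_parts hC)) ≠
          f (B.min' (P.nonempty_of_mem_parts hB)) := by
        intro he
        rw [hker] at he
        rw [P.part_eq_of_mem hC (Finset.min'_mem _ _),
          P.part_eq_of_mem hB (Finset.min'_mem _ _)] at he
        rw [he] at hm
        exact absurd rfl hm.ne
      omega
  have hfi : f ((P.part i).min' (part_nonempty P i)) = f i :=
    (hval _ (P.part_mem.2 (Finset.mem_univ i)) i (P.mem_part (Finset.mem_univ i))).symm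
  rw [rgf_def]
  apply Finset.card_bij (fun B hB => f (B.min' (P.nonempty_of_mem_parts
    (Finset.mem_filter.1 hB).1)))
  · intro B hB
    rw [Finset.mem_filter] at hB ⊢
    refine ⟨Finset.mem_image.2 ⟨_, Finset.mem_univ _, rfl⟩, ?_⟩
    rw [← hfi]
    exact (hminlt B (P.part i) hB.1 (P.part_mem.2 (Finset.mem_univ i))).1 hB.2
  · intro B hB C hC h
    rw [Finset.mem_filter] at hB hC
    have := (hker _ _).1 h
    rw [P.part_eq_of_mem hB.1 (Finset.min'_mem _ _),
      P.part_eq_of_mem hC.1 (Finset.min'_mem _ _)] at this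
    exact this
  · intro v hv
    rw [Finset.mem_filter] at hv
    obtain ⟨j, _, rfl⟩ := Finset.mem_image.1 hv.1
    refine ⟨P.part j, Finset.mem_filter.2 ⟨P.part_mem.2 (Finset.mem_univ j), ?_⟩, ?_⟩
    · rw [hminlt (P.part j) (P.part i) (P.part_mem.2 (Finset.mem_univ j))
        (P.part_mem.2 (Finset.mem_univ i)), hfi,
        ← hval _ (P.part_mem.2 (Finset.mem_univ j)) j (P.mem_part (Finset.mem_univ j))]
      exact hv.2
    · rw [← hval _ (P.part_mem.2 (Finset.mem_univ j)) j (P.mem_part (Finset.mem_univ j))]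

end NormalForm

section Construct

lemma sum_if_two (s : Finset ℕ) (p : ℕ → Prop) [DecidablePred p] :
    ∑ v ∈ s, (if p v then 2 else 1) = s.card + (s.filter p).card := by
  have : ∀ v, (if p v then 2 else 1) = 1 + (if p v then 1 else 0) := by
    intro v; by_cases h : p v <;> simp [h]
  rw [Finset.sum_congr rfl (fun v _ => this v), Finset.sum_add_distrib, ← Finset.sum_filter]
  simp

def csum (T : Finset ℕ) (v : ℕ) : ℕ := ∑ u ∈ Finset.range v, (if u + 1 ∈ T then 2 else 1)

lemma csum_mono (T : Finset ℕ) {v w : ℕ} (h : v ≤ w) : csum T v ≤ csum T w :=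
  Finset.sum_le_sum_of_subset (Finset.range_subset_range.2 h)

lemma le_csum (T : Finset ℕ) (v : ℕ) : v ≤ csum T v := by
  calc v = ∑ _u ∈ Finset.range v, 1 := by simp
  _ ≤ csum T v := Finset.sum_le_sum (fun u _ => by by_cases h : u + 1 ∈ T <;> simp [h])

lemma csum_succ (T : Finset ℕ) (v : ℕ) :
    csum T (v + 1) = csum T v + (if v + 1 ∈ T then 2 else 1) := Finset.sum_range_succ _ _

lemma csum_lt_succ (T : Finset ℕ) (v : ℕ) : csum T v < csum T (v + 1) := by
  rw [csum_succ]; by_cases h : v + 1 ∈ T <;> simp [h]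

lemma csum_top {k : ℕ} (T : Finset ℕ) (hT : T ⊆ Finset.Icc 1 k) :
    csum T k = k + T.card := by
  rw [csum, sum_if_two, Finset.card_range]
  congr 1
  apply Finset.card_bij (fun u _ => u + 1)
  · intro u hu
    exact (Finset.mem_filter.1 hu).2
  · intro u _ v _ h; omega
  · intro t ht
    have := Finset.mem_Icc.1 (hT ht)
    refine ⟨t - 1, Finset.mem_filter.2 ⟨Finset.mem_range.2 (by omega), ?_⟩, by omega⟩
    have : t - 1 + 1 = t := by omega
    rw [this]; exact ht

lemma exists_layered (n k : ℕ) (hk : k ≤ n) (T : Finset ℕ) (hT : T ⊆ Finset.Icc 1 k)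
    (hTcard : T.card = n - k) :
    ∃ P : SP n, P.parts.card = k ∧ (∀ i j : Fin n, i ≤ j → rgf P i ≤ rgf P j) ∧
      (∀ v : ℕ, (Finset.univ.filter (fun i => rgf P i = v)).card =
        if v ∈ Finset.Icc 1 k then (if v ∈ T then 2 else 1) else 0) := by
  classical
  have hn : csum T k = n := by rw [csum_top T hT]; omega
  have hex : ∀ i : Fin n, ∃ v, i.val < csum T v :=
    fun i => ⟨n, lt_of_lt_of_le i.isLt (le_csum T n)⟩
  set f : Fin n → ℕ := fun i => Nat.find (hex i) with hf
  -- basic properties of f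
  have hfspec : ∀ i : Fin n, i.val < csum T (f i) := fun i => Nat.find_spec (hex i)
  have hf1 : ∀ i : Fin n, 1 ≤ f i := by
    intro i
    rcases Nat.eq_zero_or_pos (f i) with h | h
    · have := hfspec i
      rw [h] at this
      simp [csum] at this
    · omega
  have hfk : ∀ i : Fin n, f i ≤ k := fun i => Nat.find_min' (hex i) (hn ▸ i.isLt)
  have hfmono : ∀ i j : Fin n, i ≤ j → f i ≤ f j := by
    intro i j hij
    exact Nat.find_min' (hex i) (lt_of_le_of_lt hij (hfspec j))
  -- fiber characterization
  have hfiber : ∀ (i : Fin n) (v : ℕ), 1 ≤ v →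
      (f i = v ↔ csum T (v - 1) ≤ i.val ∧ i.val < csum T v) := by
    intro i v hv
    constructor
    · rintro rfl
      refine ⟨?_, hfspec i⟩
      by_contra h
      push_neg at h
      have := Nat.find_min (hex i) (m := f i - 1) (show f i - 1 < f i by have := hf1 i; omega)
      omega
    · rintro ⟨h1, h2⟩
      have hle : f i ≤ v := Nat.find_min' (hex i) h2
      by_contra hne
      have hlt : f i ≤ v - 1 := by omega
      have := lt_of_lt_of_le (hfspec i) (csum_mono T hlt)
      omega
  -- the partition
  haveI hdec : DecidableRel (Setoid.ker f).r := fun a b => inferInstanceAs (Decidable (f a = f b))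
  let P : SP n := Finpartition.ofSetoid (Setoid.ker f)
  have hpart : ∀ i j : Fin n, j ∈ P.part i ↔ f i = f j := fun i j =>
    Finpartition.mem_part_ofSetoid_iff_rel
  have hker : ∀ i j : Fin n, f i = f j ↔ P.part i = P.part j := by
    intro i j
    constructor
    · intro h
      ext x
      rw [hpart, hpart, h]
    · intro h
      have := (hpart i j).1 (h ▸ P.mem_part (Finset.mem_univ j))
      exact this
  -- image of f
  have himg : Finset.univ.image f = Finset.Icc 1 k := by
    apply Finset.Subset.antisymm
    · intro v hv
      obtain ⟨i, _, rfl⟩ := Finset.mem_image.1 hv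
      exact Finset.mem_Icc.2 ⟨hf1 i, hfk i⟩
    · intro v hv
      rw [Finset.mem_Icc] at hv
      have hlt : csum T (v - 1) < n := by
        have h1 : csum T (v - 1) < csum T v := by
          have := csum_lt_succ T (v - 1)
          have hv1 : v - 1 + 1 = v := by omega
          rwa [hv1] at this
        exact lt_of_lt_of_le h1 (hn ▸ csum_mono T hv.2)
      refine Finset.mem_image.2 ⟨⟨csum T (v - 1), hlt⟩, Finset.mem_univ _, ?_⟩
      rw [hfiber _ v hv.1]
      constructor
      · exact le_refl _
      · have := csum_lt_succ T (v - 1)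
        have hv1 : v - 1 + 1 = v := by omega
        rwa [hv1] at this
  -- rgf P = f
  have hrgf : rgf P = f := by
    funext i
    rw [rgf_eq_count P f hker hfmono i, himg]
    have : (Finset.Icc 1 k).filter (fun v => v ≤ f i) = Finset.Icc 1 (f i) := by
      ext v
      simp only [Finset.mem_filter, Finset.mem_Icc]
      constructor
      · rintro ⟨⟨h1, _⟩, h2⟩; exact ⟨h1, h2⟩
      · rintro ⟨h1, h2⟩; exact ⟨⟨h1, le_trans h2 (hfk i)⟩, h2⟩
    rw [this, Nat.card_Icc]
    omega
  refine ⟨P, ?_, ?_, ?_⟩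
  · have := card_image_rgf P
    rw [hrgf, himg, Nat.card_Icc] at this
    omega
  · intro i j hij
    rw [hrgf]
    exact hfmono i j hij
  · intro v
    rw [hrgf]
    by_cases hv : v ∈ Finset.Icc 1 k
    · rw [if_pos hv]
      rw [Finset.mem_Icc] at hv
      have hfilter : Finset.univ.filter (fun i : Fin n => f i = v) =
          Finset.univ.filter (fun i : Fin n => csum T (v - 1) ≤ i.val ∧ i.val < csum T v) := by
        ext i
        simp only [Finset.mem_filter, Finset.mem_univ, true_and]
        exact hfiber i v hv.1
      rw [hfilter, card_val_interval _ _ (hn ▸ csum_mono T hv.2)]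
      have h1 : csum T v = csum T (v - 1) + (if v ∈ T then 2 else 1) := by
        have := csum_succ T (v - 1)
        have hv1 : v - 1 + 1 = v := by omega
        rwa [hv1] at this
      by_cases ht : v ∈ T <;> simp [ht] at h1 ⊢ <;> omega
    · rw [if_neg hv, Finset.card_eq_zero, Finset.filter_eq_empty_iff]
      intro i _
      rw [Finset.mem_Icc] at hv
      have := hf1 i
      have := hfk i
      intro h
      omega

end Construct

section Count

variable {n k : ℕ}

/-- The set of letters of the RGF of `P` that appear twice. -/
noncomputable def Fmap (P : SP n) (k : ℕ) : Finset ℕ := by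
  classical
  exact (Finset.Icc 1 k).filter (fun v => (Finset.univ.filter (fun i => rgf P i = v)).card = 2)

lemma fiber_card_formula (hk : k ≤ n) (P : SP n) (h1 : P.parts.card = k)
    (h2 : avoids13_2 P) (h3 : avoids123 P) :
    (∀ v : ℕ, (Finset.univ.filter (fun i => rgf P i = v)).card =
      if v ∈ Finset.Icc 1 k then (if v ∈ Fmap P k then 2 else 1) else 0) ∧
    (Fmap P k).card = n - k := by
  classical
  obtain ⟨hmono, hfib2⟩ := (char_iff P).1 ⟨h2, h3⟩
  set l : ℕ → ℕ := fun v => (Finset.univ.filter (fun i => rgf P i = v)).card with hl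
  have himg := image_rgf_eq P
  rw [h1] at himg
  have hl1 : ∀ v ∈ Finset.Icc 1 k, 1 ≤ l v := by
    intro v hv
    rw [← himg] at hv
    obtain ⟨i, _, rfl⟩ := Finset.mem_image.1 hv
    rw [hl, Nat.one_le_iff_ne_zero, ← Nat.pos_iff_ne_zero, Finset.card_pos]
    exact ⟨i, Finset.mem_filter.2 ⟨Finset.mem_univ i, rfl⟩⟩
  have hl0 : ∀ v ∉ Finset.Icc 1 k, l v = 0 := by
    intro v hv
    rw [hl, Finset.card_eq_zero, Finset.filter_eq_empty_iff]
    intro i _ hri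
    exact hv (himg ▸ Finset.mem_image.2 ⟨i, Finset.mem_univ i, hri⟩)
  have hform : ∀ v : ℕ, l v =
      if v ∈ Finset.Icc 1 k then (if v ∈ Fmap P k then 2 else 1) else 0 := by
    intro v
    by_cases hv : v ∈ Finset.Icc 1 k
    · rw [if_pos hv]
      by_cases h2v : v ∈ Fmap P k
      · rw [if_pos h2v]
        exact (Finset.mem_filter.1 h2v).2
      · rw [if_neg h2v]
        have ha : l v ≠ 2 := fun h => h2v (Finset.mem_filter.2 ⟨hv, h⟩)
        have hb : l v ≤ 2 := hfib2 v
        have hc := hl1 v hv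
        omega
    · rw [if_neg hv]
      exact hl0 v hv
  refine ⟨hform, ?_⟩
  have hsum : ∑ v ∈ Finset.Icc 1 k, l v = n := by
    rw [hl]
    rw [← Finset.card_eq_sum_card_fiberwise (f := rgf P) (s := Finset.univ)
      (t := Finset.Icc 1 k) (fun i _ => Finset.mem_Icc.2 ⟨one_le_rgf P i, h1 ▸ rgf_le_card P i⟩)]
    simp
  have hsum2 : ∑ v ∈ Finset.Icc 1 k, l v =
      ∑ v ∈ Finset.Icc 1 k, (if v ∈ Fmap P k then 2 else 1) := by
    apply Finset.sum_congr rfl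
    intro v hv
    rw [hform v, if_pos hv]
  rw [hsum2, sum_if_two] at hsum
  have : (Finset.Icc 1 k).filter (fun v => v ∈ Fmap P k) = Fmap P k := by
    apply Finset.Subset.antisymm
    · intro v hv; exact (Finset.mem_filter.1 hv).2
    · intro v hv
      exact Finset.mem_filter.2 ⟨(Finset.mem_filter.1 hv).1, hv⟩
  rw [this, Nat.card_Icc] at hsum
  omega

theorem count_eq (hk : k ≤ n) :
    Nat.card {P : SP n // P.parts.card = k ∧ avoids13_2 P ∧ avoids123 P} =
      k.choose (n - k) := by
  classical
  rw [Nat.card_eq_fintype_card, Fintype.card_subtype]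
  have hchoose : k.choose (n - k) = ((Finset.Icc 1 k).powersetCard (n - k)).card := by
    rw [Finset.card_powersetCard, Nat.card_Icc]
    simp
  rw [hchoose]
  apply Finset.card_bij (fun P _ => Fmap P k)
  · intro P hP
    rw [Finset.mem_filter] at hP
    obtain ⟨-, h1, h2, h3⟩ := hP
    rw [Finset.mem_powersetCard]
    exact ⟨Finset.filter_subset _ _, (fiber_card_formula hk P h1 h2 h3).2⟩
  · intro P hP Q hQ h
    rw [Finset.mem_filter] at hP hQ
    obtain ⟨-, hP1, hP2, hP3⟩ := hP
    obtain ⟨-, hQ1, hQ2, hQ3⟩ := hQ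
    apply eq_of_rgf_eq
    apply mono_eq_of_fibers _ _ ((char_iff P).1 ⟨hP2, hP3⟩).1 ((char_iff Q).1 ⟨hQ2, hQ3⟩).1
    intro v
    rw [(fiber_card_formula hk P hP1 hP2 hP3).1 v,
      (fiber_card_formula hk Q hQ1 hQ2 hQ3).1 v, h]
  · intro T hT
    rw [Finset.mem_powersetCard] at hT
    obtain ⟨P, h1, hmono, hfib⟩ := exists_layered n k hk T hT.1 hT.2
    have hfib2 : ∀ v : ℕ, (Finset.univ.filter (fun i => rgf P i = v)).card ≤ 2 := by
      intro v
      rw [hfib v]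
      split <;> (try split) <;> omega
    have havoid := (char_iff P).2 ⟨hmono, hfib2⟩
    refine ⟨P, Finset.mem_filter.2 ⟨Finset.mem_univ P, h1, havoid⟩, ?_⟩
    ext v
    rw [Fmap]
    simp only [Finset.mem_filter]
    constructor
    · rintro ⟨hv, h2v⟩
      rw [hfib v, if_pos hv] at h2v
      by_contra ht
      rw [if_neg ht] at h2v
      omega
    · intro hv
      have hvIcc : v ∈ Finset.Icc 1 k := hT.1 hv
      refine ⟨hvIcc, ?_⟩
      rw [hfib v, if_pos hvIcc, if_pos hv]

end Count

/-- A set partition of `[n]` avoids both `13/2` and `123` iff its RGF is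
layered (weakly increasing) with each letter appearing at most twice; consequently the
number of such partitions with exactly `k` blocks equals `C(k, n-k)`. -/
theorem stmt6 (n k : ℕ) (hk : k ≤ n) :
    (∀ P : SP n, (avoids13_2 P ∧ avoids123 P) ↔
      ((∀ i j : Fin n, i ≤ j → rgf P i ≤ rgf P j) ∧
        ∀ v : ℕ, (Finset.univ.filter (fun i => rgf P i = v)).card ≤ 2)) ∧
    Nat.card {P : SP n // P.parts.card = k ∧ avoids13_2 P ∧ avoids123 P} =
      k.choose (n - k) := by
  exact ⟨fun P => char_iff P, count_eq hk⟩
end
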